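/- If F is a finite set of primes and P = ∏_{p ∈ F} p, then the product ∏_{p ∈ F} sin(π(1 + 2P)/p) is strictly positive. -/

import Mathlib

theorem stmt_7 (F : Finset ℕ) (hF : ∀ p ∈ F, p.Prime) (P : ℕ) (hP : P = ∏ p ∈ F, p) :
    0 < ∏ p ∈ F, Real.sin (Real.pi * (1 + 2 * P) / p) := by
  subst hP
  apply Finset.prod_pos
  intro p hp
  have hprime := hF p hp
  obtain ⟨k, hk⟩ := Finset.dvd_prod_of_mem id hp
  have hp2 : (2:ℝ) ≤ p := by exact_mod_cast hprime.two_le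
  have hppos : (0:ℝ) < p := by linarith
  have h : Real.pi * (1 + 2 * (∏ q ∈ F, q : ℕ)) / p
      = Real.pi / p + (k : ℝ) * (2 * Real.pi) := by
    have hk' : (∏ q ∈ F, q) = p * k := by simpa using hk
    rw [hk']
    field_simp
    push_cast; ring
  rw [h, Real.sin_add_nat_mul_two_pi]
  apply Real.sin_pos_of_pos_of_lt_pi
  · positivity
  · rw [div_lt_iff₀ hppos]; nlinarith [Real.pi_pos]
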